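/- arXiv:2604.23202 — 2 statements merged into one kernel-verified Lean document; each statement's English description precedes it below -/
import Mathlib

section
/- Let b : ℂⁿ/2πℤⁿ → ℂ be analytic on the strip D(s) = {|Im x| ≤ s}, real-valued on the real torus, and satisfy sup_{D(s)} |b| ≤ γ, where γ is small enough that ∑_{p ∈ 2ℕ+1} (|v|/s)^p γ ≤ γ^{1/10}|v| for |v| ≤ 9s/10. Then for every x = u + iv with u ∈ ℝⁿ and |v| ≤ (9/10)s, one has |Im b(x)| ≤ γ^{1/10} |Im x|. -/
open scoped BigOperators

open Complex Filter Asymptotics Metric Set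

lemma reflect_hasDerivAt {f : ℂ → ℂ} {c z : ℂ}
    (h : HasDerivAt f c ((starRingEnd ℂ) z)) :
    HasDerivAt (fun w => (starRingEnd ℂ) (f ((starRingEnd ℂ) w))) ((starRingEnd ℂ) c) z := by
  rw [hasDerivAt_iff_isLittleO] at h ⊢
  have h2 := h.comp_tendsto ((Complex.continuous_conj.tendsto z))
  rw [isLittleO_iff] at h2 ⊢
  intro ε hε
  filter_upwards [h2 hε] with w hw
  have heq : (starRingEnd ℂ) (f ((starRingEnd ℂ) w)) - (starRingEnd ℂ) (f ((starRingEnd ℂ) z))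
      - (w - z) • (starRingEnd ℂ) c
      = (starRingEnd ℂ) (f ((starRingEnd ℂ) w) - f ((starRingEnd ℂ) z)
        - ((starRingEnd ℂ) w - (starRingEnd ℂ) z) • c) := by
    simp [smul_eq_mul, map_sub, map_mul]
  rw [heq, RCLike.norm_conj]
  calc ‖f ((starRingEnd ℂ) w) - f ((starRingEnd ℂ) z)
      - ((starRingEnd ℂ) w - (starRingEnd ℂ) z) • c‖
      ≤ ε * ‖(starRingEnd ℂ) w - (starRingEnd ℂ) z‖ := by simpa using hw
    _ = ε * ‖w - z‖ := by rw [← map_sub, RCLike.norm_conj]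

/-- An analytic, real-on-the-real-torus, 2π-periodic function b
with sup bound γ on the strip of width s and a concrete smallness assumption
satisfies |Im b(x)| ≤ γ^{1/10} |Im x| on the strip of width (9/10)s. -/
theorem stmt_2 (n : ℕ) (s γ : ℝ) (hs : 0 < s) (hγ : 0 < γ)
    (b : (Fin n → ℂ) → ℂ)
    (hanalytic : AnalyticOn ℂ b {x : Fin n → ℂ | ∀ j, |(x j).im| ≤ s})
    (hper : ∀ (x : Fin n → ℂ) (j : Fin n),
      b (fun i => x i + if i = j then ((2 * Real.pi : ℝ) : ℂ) else 0) = b x)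
    (hreal : ∀ u : Fin n → ℝ, (b (fun j => ((u j : ℝ) : ℂ))).im = 0)
    (hbound : ∀ x : Fin n → ℂ, (∀ j, |(x j).im| ≤ s) → ‖b x‖ ≤ γ)
    (hsmall : ∀ v : ℝ, |v| ≤ 9 / 10 * s →
      (∑' p : ℕ, (|v| / s) ^ (2 * p + 1) * γ) ≤ γ ^ ((1 : ℝ) / 10) * |v|) :
    ∀ x : Fin n → ℂ, ‖(fun j => (x j).im)‖ ≤ 9 / 10 * s →
      |(b x).im| ≤ γ ^ ((1 : ℝ) / 10) * ‖(fun j => (x j).im)‖ := by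
  intro x hx
  set v : Fin n → ℝ := fun j => (x j).im with hvdef
  set V : ℝ := ‖v‖ with hVdef
  have hV0 : 0 ≤ V := norm_nonneg _
  have hvj : ∀ j, |(x j).im| ≤ V := by
    intro j
    simpa [Real.norm_eq_abs] using norm_le_pi_norm v j
  rcases eq_or_lt_of_le hV0 with hV0' | hVpos
  · -- degenerate case: x is real
    have hxim : ∀ j, (x j).im = 0 := by
      intro j
      have := hvj j
      rw [← hV0'] at this
      exact abs_eq_zero.mp (le_antisymm this (abs_nonneg _))
    have hxeq : x = fun j => (((x j).re : ℝ) : ℂ) := by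
      funext j
      exact Complex.ext rfl (by simp [hxim j])
    have : (b x).im = 0 := by rw [hxeq]; exact hreal fun j => (x j).re
    rw [this, abs_zero]
    positivity
  -- main case
  have hVs : V < s := lt_of_le_of_lt hx (by linarith)
  set R : ℝ := s / V with hRdef
  have hR1 : 1 < R := (one_lt_div hVpos).mpr hVs
  have hR0 : 0 < R := lt_trans one_pos hR1
  set y : ℂ → (Fin n → ℂ) := fun τ j => ((x j).re : ℂ) + τ * ((x j).im : ℂ) with hydef
  set g : ℂ → ℂ := fun τ => b (y τ) with hgdef
  have him : ∀ (τ : ℂ) j, (y τ j).im = τ.im * (x j).im := by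
    intro τ j; simp [hydef]
  have hmem : ∀ τ : ℂ, |τ.im| ≤ R → ∀ j, |(y τ j).im| ≤ s := by
    intro τ hτ j
    rw [him, abs_mul]
    calc |τ.im| * |(x j).im| ≤ R * V := by
          apply mul_le_mul hτ (hvj j) (abs_nonneg _) hR0.le
      _ = s := div_mul_cancel₀ s (ne_of_gt hVpos)
  have hmem' : ∀ τ : ℂ, |τ.im| < R → ∀ j, |(y τ j).im| < s := by
    intro τ hτ j
    rw [him, abs_mul]
    calc |τ.im| * |(x j).im| ≤ |τ.im| * V := by
          apply mul_le_mul_of_nonneg_left (hvj j) (abs_nonneg _)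
      _ < R * V := by exact mul_lt_mul_of_pos_right hτ hVpos
      _ = s := div_mul_cancel₀ s (ne_of_gt hVpos)
  -- differentiability of g on the ball of radius R
  have hyopen : IsOpen {w : Fin n → ℂ | ∀ j, |(w j).im| < s} := by
    have : {w : Fin n → ℂ | ∀ j, |(w j).im| < s}
        = ⋂ j, (fun w : Fin n → ℂ => |(w j).im|) ⁻¹' (Set.Iio s) := by
      ext w; simp
    rw [this]
    exact isOpen_iInter_of_finite fun j =>
      (((Complex.continuous_im.comp (continuous_apply j)).abs)).isOpen_preimage _ isOpen_Iio
  have hgdiff : DifferentiableOn ℂ g (ball (0:ℂ) R) := by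
    intro τ hτ
    apply DifferentiableAt.differentiableWithinAt
    have hτim : |τ.im| < R := by
      calc |τ.im| ≤ ‖τ‖ := Complex.abs_im_le_norm τ
        _ < R := by simpa using mem_ball_zero_iff.mp hτ
    have hnhds : {w : Fin n → ℂ | ∀ j, |(w j).im| ≤ s} ∈ nhds (y τ) := by
      apply Filter.mem_of_superset (hyopen.mem_nhds (hmem' τ hτim))
      intro w hw j; exact (hw j).le
    have hba : AnalyticAt ℂ b (y τ) := by
      have := (hanalytic (y τ) (hmem τ hτim.le)).mono_of_mem_nhdsWithin
        (t := Set.univ) (by rwa [nhdsWithin_univ])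
      exact analyticWithinAt_univ.mp this
    have hy : DifferentiableAt ℂ y τ := by
      rw [differentiableAt_pi]
      intro j
      exact (differentiableAt_id.mul_const _).const_add _
    exact hba.differentiableAt.comp τ hy
  have hgbound : ∀ τ : ℂ, |τ.im| ≤ R → ‖g τ‖ ≤ γ := fun τ h => hbound _ (hmem τ h)
  have hgreal : ∀ t : ℝ, (g (t : ℂ)).im = 0 := by
    intro t
    have : y (t : ℂ) = fun j => (((x j).re + t * (x j).im : ℝ) : ℂ) := by
      funext j; push_cast; rfl
    rw [hgdef]; simp only []
    rw [this]
    exact hreal _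
  -- reflection: h w = conj (g (conj w))
  set h : ℂ → ℂ := fun w => (starRingEnd ℂ) (g ((starRingEnd ℂ) w)) with hhdef
  have hhdiff : DifferentiableOn ℂ h (ball (0:ℂ) R) := by
    intro z hz
    apply DifferentiableAt.differentiableWithinAt
    have hz' : (starRingEnd ℂ) z ∈ ball (0:ℂ) R := by
      rw [mem_ball_zero_iff] at hz ⊢
      rwa [RCLike.norm_conj]
    have := (hgdiff.differentiableAt (isOpen_ball.mem_nhds hz')).hasDerivAt
    exact (reflect_hasDerivAt this).differentiableAt
  -- identity theorem: g = h on the ball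
  have hball_i : (I : ℂ) ∈ ball (0:ℂ) R := by
    rw [mem_ball_zero_iff]; simpa using hR1
  have hgh : g I = h I := by
    have hsub : EqOn (fun z => g z - h z) 0 (ball (0:ℂ) R) := by
      apply AnalyticOnNhd.eqOn_zero_of_preconnected_of_frequently_eq_zero
        ((hgdiff.sub hhdiff).analyticOnNhd isOpen_ball)
        (convex_ball (0:ℂ) R).isPreconnected (mem_ball_self hR0)
      have hψreal : ∀ t : ℝ, g (t:ℂ) - h (t:ℂ) = 0 := by
        intro t
        have h1 : (starRingEnd ℂ) ((t:ℂ)) = (t:ℂ) := Complex.conj_ofReal t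
        have h2 : (starRingEnd ℂ) (g (t:ℂ)) = g (t:ℂ) :=
          Complex.conj_eq_iff_im.mpr (hgreal t)
        simp [hhdef, h1, h2]
      have htend : Tendsto (fun k : ℕ => ((1 / (k+1) : ℝ) : ℂ)) atTop (nhdsWithin 0 {(0:ℂ)}ᶜ) := by
        rw [tendsto_nhdsWithin_iff]
        constructor
        · have := tendsto_one_div_add_atTop_nhds_zero_nat (𝕜 := ℝ)
          have := (Complex.continuous_ofReal.tendsto 0).comp this
          simpa [Function.comp_def, one_div] using this
        · filter_upwards with k
          simp only [Set.mem_compl_iff, Set.mem_singleton_iff]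
          intro hc
          rw [Complex.ofReal_eq_zero] at hc
          have : (0:ℝ) < 1 / (k+1) := by positivity
          linarith [hc ▸ this]
      exact htend.frequently (Filter.Frequently.of_forall fun k => hψreal _)
    have := hsub hball_i
    simpa [sub_eq_zero] using this
  have hgi : g (-I) = (starRingEnd ℂ) (g I) := by
    have : h I = (starRingEnd ℂ) (g (-I)) := by
      rw [hhdef]; simp [Complex.conj_I]
    rw [this] at hgh
    have := congrArg (starRingEnd ℂ) hgh
    simpa using this.symm
  -- Schwarz lemma
  set φ : ℂ → ℂ := fun z => g z - g (-z) with hφdef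
  have hφdiff : DifferentiableOn ℂ φ (ball (0:ℂ) R) := by
    apply hgdiff.sub
    intro z hz
    apply DifferentiableAt.differentiableWithinAt
    have hz' : -z ∈ ball (0:ℂ) R := by
      rw [mem_ball_zero_iff] at hz ⊢; rwa [norm_neg]
    exact (hgdiff.differentiableAt (isOpen_ball.mem_nhds hz')).comp z
      differentiable_neg.differentiableAt
  have hφ0 : φ 0 = 0 := by simp [hφdef]
  have hφI : ‖φ I‖ ≤ 2 * γ / R := by
    apply le_of_forall_pos_le_add
    intro ε hε
    have hmaps : MapsTo φ (ball (0:ℂ) R) (ball (φ 0) (2 * γ + ε * R)) := by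
      intro z hz
      rw [hφ0, mem_ball_zero_iff]
      have hzim : |z.im| ≤ R := by
        calc |z.im| ≤ ‖z‖ := Complex.abs_im_le_norm z
          _ ≤ R := le_of_lt (by simpa using mem_ball_zero_iff.mp hz)
      have hzim' : |(-z).im| ≤ R := by rwa [Complex.neg_im, abs_neg]
      calc ‖φ z‖ ≤ ‖g z‖ + ‖g (-z)‖ := norm_sub_le _ _
        _ ≤ γ + γ := add_le_add (hgbound z hzim) (hgbound (-z) hzim')
        _ < 2 * γ + ε * R := by nlinarith
    have := Complex.dist_le_div_mul_dist_of_mapsTo_ball hφdiff (hmaps.mono_right ball_subset_closedBall) hball_i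
    rw [hφ0] at this
    have hd : dist (φ I) 0 = ‖φ I‖ := dist_zero_right _
    have hdI : dist (I:ℂ) 0 = 1 := by simp
    rw [hd, hdI, mul_one] at this
    calc ‖φ I‖ ≤ (2 * γ + ε * R) / R := this
      _ = 2 * γ / R + ε := by field_simp
  have hkey : |(g I).im| ≤ γ * V / s := by
    have h1 : φ I = g I - (starRingEnd ℂ) (g I) := by rw [hφdef]; simp only []; rw [hgi]
    have h2 : g I - (starRingEnd ℂ) (g I) = ((2 * (g I).im : ℝ) : ℂ) * I := by
      exact_mod_cast Complex.sub_conj (g I)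
    have h3 : ‖φ I‖ = 2 * |(g I).im| := by
      rw [h1, h2]
      simp [abs_mul]
    have h4 : 2 * |(g I).im| ≤ 2 * γ / R := h3 ▸ hφI
    have h5 : 2 * γ / R = 2 * (γ * V / s) := by
      rw [hRdef]; field_simp
    linarith [h4, h5 ▸ h4]
  have hgI : g I = b x := by
    have hy : y I = x := by
      funext j
      show ((x j).re : ℂ) + I * ((x j).im : ℂ) = x j
      rw [mul_comm, Complex.re_add_im]
    show b (y I) = b x
    rw [hy]
  rw [← hgI]
  -- conclude via the tsum hypothesis
  have hVsle : V / s < 1 := (div_lt_one hs).mpr hVs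
  have hVs0 : 0 ≤ V / s := by positivity
  have hsum : Summable (fun p : ℕ => (V / s) ^ (2 * p + 1) * γ) := by
    have hgeo : Summable (fun p : ℕ => ((V/s)^2) ^ p) :=
      summable_geometric_of_lt_one (by positivity) (by nlinarith)
    apply (hgeo.mul_left ((V/s) * γ)).congr
    intro p
    rw [pow_add, pow_mul, pow_one]; ring
  have hfirst : (V / s) ^ (2 * 0 + 1) * γ ≤ ∑' p : ℕ, (V / s) ^ (2 * p + 1) * γ :=
    Summable.le_tsum hsum 0 (fun p _ => by positivity)
  have htsum := hsmall V (by rwa [_root_.abs_of_nonneg hV0])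
  rw [_root_.abs_of_nonneg hV0] at htsum
  calc |(g I).im| ≤ γ * V / s := hkey
    _ = (V / s) ^ (2 * 0 + 1) * γ := by ring
    _ ≤ ∑' p : ℕ, (V / s) ^ (2 * p + 1) * γ := hfirst
    _ ≤ γ ^ ((1:ℝ)/10) * V := htsum
end

section
/- Let κ, ρ > 0 with κ < ρ, and let m, n ∈ ℤ, t ∈ ℤ with |t| ≥ Λ max(|m|,|n|) for some Λ > 0, and δ > 0. Then ∑_{l ∈ ℤ, Λ|l| > |t|} l² e^{−|m−l|ρ} e^{−|l−n|ρ} ≤ C(κ,Λ,δ) e^{−|n−m|(ρ−κ)} e^{−|t|κ(1/Λ − 1/(Λ+δ))} · S, where S = ∑_{l ∈ ℤ} l² e^{−(κ/2)|m−l|} e^{−(κ/2)|n−l|} < ∞. In particular, the left-hand side is bounded by C' e^{−|n−m|(ρ−κ)} for a constant C' depending only on κ, Λ, δ, uniformly in m, n, t with |t| ≥ (Λ+δ)max(|m|,|n|). -/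
open scoped BigOperators


lemma aux_summable (c : ℝ) (hc : 0 < c) :
    Summable (fun j : ℤ => ((j : ℝ) ^ 2 + 1) * Real.exp (-c * |(j : ℝ)|)) := by
  have hr0 : (0:ℝ) ≤ Real.exp (-c) := (Real.exp_pos _).le
  have hr : Real.exp (-c) < 1 := by
    rw [Real.exp_lt_one_iff]; linarith
  have hnat : Summable (fun n : ℕ => ((n : ℝ) ^ 2 + 1) * Real.exp (-c) ^ n) := by
    have h1 : Summable (fun n : ℕ => (n : ℝ) ^ 2 * Real.exp (-c) ^ n) :=
      summable_pow_mul_geometric_of_norm_lt_one 2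
        (by rwa [Real.norm_eq_abs, abs_of_nonneg hr0])
    have h2 : Summable (fun n : ℕ => Real.exp (-c) ^ n) :=
      summable_geometric_of_lt_one hr0 hr
    simpa [add_mul, one_mul] using h1.add h2
  have key : ∀ n : ℕ, ((n:ℝ)^2 + 1) * Real.exp (-c) ^ n
      = (((n:ℤ):ℝ)^2 + 1) * Real.exp (-c * |((n:ℤ):ℝ)|) := by
    intro n
    rw [← Real.exp_nat_mul]
    push_cast
    rw [abs_of_nonneg (by positivity : (0:ℝ) ≤ (n:ℝ))]
    ring_nf
  refine Summable.of_nat_of_neg (hnat.congr fun n => key n) (hnat.congr fun n => ?_)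
  rw [key n]; push_cast; rw [abs_neg]; ring_nf

lemma S_summable (c : ℝ) (hc : 0 < c) (m n : ℤ) :
    Summable (fun l : ℤ => ((l : ℝ)) ^ 2 * Real.exp (-c * (|m - l| : ℝ)) *
      Real.exp (-c * (|n - l| : ℝ))) := by
  refine Summable.of_nonneg_of_le (fun l => by positivity) (fun l => ?_)
    ((aux_summable c hc).mul_left (Real.exp (c * |(m:ℝ)|)))
  push_cast
  have h1 : Real.exp (-c * |(m:ℝ) - l|) ≤ Real.exp (c * |(m:ℝ)|) * Real.exp (-c * |(l:ℝ)|) := by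
    rw [← Real.exp_add]
    apply Real.exp_le_exp.2
    have h := abs_sub_abs_le_abs_sub (l:ℝ) (m:ℝ)
    rw [abs_sub_comm (l:ℝ) (m:ℝ)] at h
    nlinarith
  have h2 : Real.exp (-c * |(n:ℝ) - l|) ≤ 1 :=
    Real.exp_le_one_iff.2 (by nlinarith [abs_nonneg ((n:ℝ) - l)])
  calc ((l:ℝ))^2 * Real.exp (-c * |(m:ℝ) - l|) * Real.exp (-c * |(n:ℝ) - l|)
      ≤ ((l:ℝ)^2 + 1) * (Real.exp (c * |(m:ℝ)|) * Real.exp (-c * |(l:ℝ)|)) * 1 := by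
        gcongr <;> nlinarith [sq_nonneg (l:ℝ)]
    _ = Real.exp (c * |(m:ℝ)|) * (((l:ℝ)^2 + 1) * Real.exp (-c * |(l:ℝ)|)) := by ring

lemma sq_mul_exp_neg_le (a x : ℝ) (ha : 0 < a) (hx : 0 ≤ x) :
    x ^ 2 * Real.exp (-(a * x)) ≤ 4 / a ^ 2 := by
  have h1 : a * x / 2 + 1 ≤ Real.exp (a * x / 2) := Real.add_one_le_exp _
  have h3 : Real.exp (a * x / 2) ^ 2 = Real.exp (a * x) := by
    rw [sq, ← Real.exp_add]; ring_nf
  have h4 : (a * x / 2) ^ 2 ≤ Real.exp (a * x) := by nlinarith [mul_nonneg ha.le hx]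
  have h5 : Real.exp (-(a * x)) * Real.exp (a * x) = 1 := by
    rw [← Real.exp_add]; simp
  rw [le_div_iff₀ (by positivity : (0:ℝ) < a ^ 2)]
  nlinarith [Real.exp_pos (-(a * x)), mul_le_mul_of_nonneg_right h4 (Real.exp_pos (-(a * x))).le]

set_option maxHeartbeats 1000000 in
/-- Tail sum estimate for the cross terms in Poisson brackets:
∑_{Λ|l|>|t|} l² e^{−|m−l|ρ} e^{−|l−n|ρ} ≤ C e^{−|n−m|(ρ−κ)} e^{−|t|κ(1/Λ−1/(Λ+δ))} S,
with S = ∑_l l² e^{−(κ/2)|m−l|} e^{−(κ/2)|n−l|} < ∞, and in particular a bound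
C' e^{−|n−m|(ρ−κ)} uniform in m, n, t with |t| ≥ (Λ+δ) max(|m|,|n|). -/
theorem stmt_7 (κ Λ δ : ℝ) (hκ : 0 < κ) (hΛ : 0 < Λ) (hδ : 0 < δ) :
    (∀ m n : ℤ, Summable (fun l : ℤ =>
      ((l : ℝ)) ^ 2 * Real.exp (-(κ / 2) * (|m - l| : ℝ)) *
        Real.exp (-(κ / 2) * (|n - l| : ℝ)))) ∧
    ∃ C' : ℝ, 0 < C' ∧
      ∀ ρ : ℝ, κ < ρ → ∀ m n t : ℤ,
        (Λ + δ) * max (|m| : ℝ) (|n| : ℝ) ≤ (|t| : ℝ) →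
        ((∑' l : ℤ, if (|t| : ℝ) < Λ * (|l| : ℝ) then
              ((l : ℝ)) ^ 2 * Real.exp (-(|m - l| : ℝ) * ρ) *
                Real.exp (-(|l - n| : ℝ) * ρ)
            else 0)
            ≤ C' * Real.exp (-(|n - m| : ℝ) * (ρ - κ)) *
              Real.exp (-(|t| : ℝ) * κ * (1 / Λ - 1 / (Λ + δ))) *
              (∑' l : ℤ, ((l : ℝ)) ^ 2 * Real.exp (-(κ / 2) * (|m - l| : ℝ)) *
                Real.exp (-(κ / 2) * (|n - l| : ℝ)))) ∧
        (∑' l : ℤ, if (|t| : ℝ) < Λ * (|l| : ℝ) then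
              ((l : ℝ)) ^ 2 * Real.exp (-(|m - l| : ℝ) * ρ) *
                Real.exp (-(|l - n| : ℝ) * ρ)
            else 0)
            ≤ C' * Real.exp (-(|n - m| : ℝ) * (ρ - κ)) := by
  have hc : (0:ℝ) < κ / 2 := by linarith
  have hA : Summable (fun j : ℤ => ((j : ℝ) ^ 2 + 1) * Real.exp (-(κ/2) * |(j : ℝ)|)) :=
    aux_summable (κ/2) hc
  set A : ℝ := ∑' j : ℤ, ((j : ℝ) ^ 2 + 1) * Real.exp (-(κ/2) * |(j : ℝ)|) with hA_def
  have hA1 : 1 ≤ A := by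
    have h0 := Summable.le_tsum hA 0 (fun j _ => by positivity)
    have hterm0 : ((((0:ℤ)):ℝ)^2 + 1) * Real.exp (-(κ/2) * |(((0:ℤ)):ℝ)|) = 1 := by
      norm_num
    rw [hA_def]
    linarith [h0, hterm0.le, hterm0.ge]
  have hη : (0:ℝ) < 1 / Λ - 1 / (Λ + δ) := by
    have : 1 / (Λ + δ) < 1 / Λ := one_div_lt_one_div_of_lt hΛ (by linarith)
    linarith
  set η : ℝ := 1 / Λ - 1 / (Λ + δ) with hη_def
  set a : ℝ := (Λ + δ) * κ * η with ha_def
  have ha : 0 < a := by rw [ha_def]; exact mul_pos (mul_pos (by linarith) hκ) hη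
  clear_value A η a
  refine ⟨fun m n => S_summable (κ/2) hc m n, (2 + 8 / a ^ 2) * A,
    mul_pos (by nlinarith [div_pos (by norm_num : (0:ℝ) < 8) (pow_pos ha 2)]) (by linarith), ?_⟩
  intro ρ hρ m n t ht
  -- notation
  set E1 : ℝ := Real.exp (-(|n - m| : ℝ) * (ρ - κ)) with hE1
  set E2 : ℝ := Real.exp (-(|t| : ℝ) * κ * η) with hE2
  have hSsum := S_summable (κ/2) hc m n
  set S : ℝ := ∑' l : ℤ, ((l : ℝ)) ^ 2 * Real.exp (-(κ / 2) * (|m - l| : ℝ)) *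
      Real.exp (-(κ / 2) * (|n - l| : ℝ)) with hS_def
  have hS0 : 0 ≤ S := tsum_nonneg fun l => by positivity
  set M : ℝ := max (|m| : ℝ) (|n| : ℝ) with hM_def
  have hM0 : (0:ℝ) ≤ M := by rw [hM_def]; positivity
  have ht0 : (0:ℝ) ≤ (|t| : ℝ) := by positivity
  clear_value E1 E2 S M
  -- termwise bound
  have hterm : ∀ l : ℤ, (if (|t| : ℝ) < Λ * (|l| : ℝ) then
      ((l : ℝ)) ^ 2 * Real.exp (-(|m - l| : ℝ) * ρ) * Real.exp (-(|l - n| : ℝ) * ρ)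
      else 0) ≤ (E1 * E2) * (((l : ℝ)) ^ 2 * Real.exp (-(κ / 2) * (|m - l| : ℝ)) *
        Real.exp (-(κ / 2) * (|n - l| : ℝ))) := by
    intro l
    by_cases h : (|t| : ℝ) < Λ * (|l| : ℝ)
    · rw [if_pos h]
      rw [hE1, hE2]
      push_cast at h ⊢
      set A1 : ℝ := |(m:ℝ) - l| with hA1d
      set A2 : ℝ := |(l:ℝ) - n| with hA2d
      have hA1nn : 0 ≤ A1 := by rw [hA1d]; positivity
      have hA2nn : 0 ≤ A2 := by rw [hA2d]; positivity
      clear_value A1 A2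
      have hA2' : |(n:ℝ) - l| = A2 := by rw [hA2d]; exact abs_sub_comm (n:ℝ) (l:ℝ)
      rw [hA2']
      have htr : |(n:ℝ) - m| ≤ A1 + A2 := by
        have := abs_sub_le (n:ℝ) (l:ℝ) (m:ℝ)
        rw [abs_sub_comm (n:ℝ) (l:ℝ), abs_sub_comm (l:ℝ) (m:ℝ)] at this
        linarith
      have hmM : |(m:ℝ)| ≤ M := by rw [hM_def]; exact le_max_left _ _
      have hnM : |(n:ℝ)| ≤ M := by rw [hM_def]; exact le_max_right _ _
      have htM : (Λ + δ) * M ≤ (|t|:ℝ) := ht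
      have hl : (|t|:ℝ) / Λ < |(l:ℝ)| := by
        rw [div_lt_iff₀ hΛ]; linarith [h]
      have hmt : |(m:ℝ)| ≤ (|t|:ℝ) / (Λ + δ) := by
        rw [le_div_iff₀ (by linarith : (0:ℝ) < Λ + δ)]; nlinarith
      have hnt : |(n:ℝ)| ≤ (|t|:ℝ) / (Λ + δ) := by
        rw [le_div_iff₀ (by linarith : (0:ℝ) < Λ + δ)]; nlinarith
      have hdiv : (|t|:ℝ) / Λ - (|t|:ℝ) / (Λ + δ) = (|t|:ℝ) * η := by
        rw [hη_def]; field_simp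
      have ha1 : (|t|:ℝ) * η ≤ A1 := by
        have := abs_sub_abs_le_abs_sub (l:ℝ) (m:ℝ)
        rw [abs_sub_comm (l:ℝ) (m:ℝ)] at this
        rw [← hdiv]; linarith
      have ha2 : (|t|:ℝ) * η ≤ A2 := by
        have := abs_sub_abs_le_abs_sub (l:ℝ) (n:ℝ)
        rw [← hdiv]; linarith
      have hexp : Real.exp (-A1 * ρ) * Real.exp (-A2 * ρ) ≤
          Real.exp (-|(n:ℝ) - m| * (ρ - κ)) * Real.exp (-(|t|:ℝ) * κ * η) *
            (Real.exp (-(κ/2) * A1) * Real.exp (-(κ/2) * A2)) := by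
        rw [← Real.exp_add, ← Real.exp_add, ← Real.exp_add, ← Real.exp_add]
        apply Real.exp_le_exp.2
        nlinarith [mul_le_mul_of_nonneg_right htr (by linarith : (0:ℝ) ≤ ρ - κ),
          mul_le_mul_of_nonneg_right ha1 hκ.le,
          mul_le_mul_of_nonneg_right ha2 hκ.le]
      calc ((l:ℝ))^2 * Real.exp (-A1 * ρ) * Real.exp (-A2 * ρ)
          = ((l:ℝ))^2 * (Real.exp (-A1 * ρ) * Real.exp (-A2 * ρ)) := by ring
        _ ≤ ((l:ℝ))^2 * (Real.exp (-|(n:ℝ) - m| * (ρ - κ)) * Real.exp (-(|t|:ℝ) * κ * η) *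
            (Real.exp (-(κ/2) * A1) * Real.exp (-(κ/2) * A2))) :=
            mul_le_mul_of_nonneg_left hexp (sq_nonneg _)
        _ = Real.exp (-|(n:ℝ) - m| * (ρ - κ)) * Real.exp (-(|t|:ℝ) * κ * η) *
            ((l:ℝ)^2 * Real.exp (-(κ/2) * A1) * Real.exp (-(κ/2) * A2)) := by ring
    · rw [if_neg h]
      have h1 : 0 ≤ E1 := by rw [hE1]; positivity
      have h2 : 0 ≤ E2 := by rw [hE2]; positivity
      exact mul_nonneg (mul_nonneg h1 h2) (by positivity)
  have hLsum : Summable (fun l : ℤ => if (|t| : ℝ) < Λ * (|l| : ℝ) then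
      ((l : ℝ)) ^ 2 * Real.exp (-(|m - l| : ℝ) * ρ) * Real.exp (-(|l - n| : ℝ) * ρ)
      else 0) :=
    Summable.of_nonneg_of_le (fun l => by positivity) hterm (hSsum.mul_left (E1 * E2))
  have hmain : (∑' l : ℤ, if (|t| : ℝ) < Λ * (|l| : ℝ) then
      ((l : ℝ)) ^ 2 * Real.exp (-(|m - l| : ℝ) * ρ) * Real.exp (-(|l - n| : ℝ) * ρ)
      else 0) ≤ (E1 * E2) * S := by
    calc _ ≤ ∑' l : ℤ, (E1 * E2) * (((l : ℝ)) ^ 2 * Real.exp (-(κ / 2) * (|m - l| : ℝ)) *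
          Real.exp (-(κ / 2) * (|n - l| : ℝ))) :=
        Summable.tsum_le_tsum hterm hLsum (hSsum.mul_left _)
      _ = (E1 * E2) * S := by rw [hS_def]; exact tsum_mul_left
  -- bound on S
  have hSbound : S ≤ (2 + 2 * M ^ 2) * A := by
    have hg : Summable (fun j : ℤ => (2 * (j:ℝ)^2 + 2 * (m:ℝ)^2) * Real.exp (-(κ/2) * |(j:ℝ)|)) := by
      refine Summable.of_nonneg_of_le (fun j => by positivity) (fun j => ?_)
        (hA.mul_left (2 + 2 * (m:ℝ)^2))
      have he : (0:ℝ) ≤ Real.exp (-(κ/2) * |(j:ℝ)|) := (Real.exp_pos _).le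
      nlinarith [sq_nonneg (j:ℝ), sq_nonneg (m:ℝ), mul_nonneg (mul_nonneg (sq_nonneg (m:ℝ)) (sq_nonneg (j:ℝ))) he]
    have hcast : ∀ l : ℤ, (fun j : ℤ => (2 * (j:ℝ)^2 + 2 * (m:ℝ)^2) *
        Real.exp (-(κ/2) * |(j:ℝ)|)) ((Equiv.subLeft m) l)
        = (2 * ((m:ℝ) - l)^2 + 2 * (m:ℝ)^2) * Real.exp (-(κ/2) * |(m:ℝ) - l|) := by
      intro l
      simp only [Equiv.subLeft_apply]
      push_cast
      ring_nf
    have hcomp : Summable (fun l : ℤ => (2 * ((m:ℝ) - l)^2 + 2 * (m:ℝ)^2) *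
        Real.exp (-(κ/2) * |(m:ℝ) - l|)) :=
      (hg.comp_injective (Equiv.subLeft m).injective).congr hcast
    have hstep1 : S ≤ ∑' l : ℤ, (2 * ((m:ℝ) - l)^2 + 2 * (m:ℝ)^2) *
        Real.exp (-(κ/2) * |(m:ℝ) - l|) := by
      rw [hS_def]
      refine Summable.tsum_le_tsum (fun l => ?_) hSsum hcomp
      push_cast
      have he1 : (0:ℝ) ≤ Real.exp (-(κ/2) * |(m:ℝ) - l|) := (Real.exp_pos _).le
      have he2 : Real.exp (-(κ/2) * |(n:ℝ) - l|) ≤ 1 :=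
        Real.exp_le_one_iff.2 (by nlinarith [abs_nonneg ((n:ℝ) - l)])
      have hsq : ((l:ℝ))^2 ≤ 2 * ((m:ℝ) - l)^2 + 2 * (m:ℝ)^2 := by
        nlinarith [sq_nonneg (2*(m:ℝ) - l)]
      calc ((l:ℝ))^2 * Real.exp (-(κ/2) * |(m:ℝ) - l|) * Real.exp (-(κ/2) * |(n:ℝ) - l|)
          ≤ ((l:ℝ))^2 * Real.exp (-(κ/2) * |(m:ℝ) - l|) * 1 := by
            apply mul_le_mul_of_nonneg_left he2 (by positivity)
        _ ≤ (2 * ((m:ℝ) - l)^2 + 2 * (m:ℝ)^2) * Real.exp (-(κ/2) * |(m:ℝ) - l|) := by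
            rw [mul_one]; exact mul_le_mul_of_nonneg_right hsq he1
    have hstep2 : (∑' l : ℤ, (2 * ((m:ℝ) - l)^2 + 2 * (m:ℝ)^2) *
        Real.exp (-(κ/2) * |(m:ℝ) - l|)) =
        ∑' j : ℤ, (2 * (j:ℝ)^2 + 2 * (m:ℝ)^2) * Real.exp (-(κ/2) * |(j:ℝ)|) := by
      rw [← (Equiv.subLeft m).tsum_eq (fun j : ℤ => (2 * (j:ℝ)^2 + 2 * (m:ℝ)^2) *
        Real.exp (-(κ/2) * |(j:ℝ)|))]
      exact tsum_congr fun l => (hcast l).symm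
    have hstep3 : (∑' j : ℤ, (2 * (j:ℝ)^2 + 2 * (m:ℝ)^2) * Real.exp (-(κ/2) * |(j:ℝ)|))
        ≤ (2 + 2 * (m:ℝ)^2) * A := by
      calc _ ≤ ∑' j : ℤ, (2 + 2 * (m:ℝ)^2) * (((j:ℝ)^2 + 1) * Real.exp (-(κ/2) * |(j:ℝ)|)) := by
            refine Summable.tsum_le_tsum (fun j => ?_) hg (hA.mul_left _)
            have he : (0:ℝ) ≤ Real.exp (-(κ/2) * |(j:ℝ)|) := (Real.exp_pos _).le
            nlinarith [mul_nonneg (mul_nonneg (sq_nonneg (m:ℝ)) (sq_nonneg (j:ℝ))) he]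
        _ = (2 + 2 * (m:ℝ)^2) * A := by rw [hA_def]; exact tsum_mul_left
    have hm2 : (m:ℝ)^2 ≤ M^2 := by
      have : |(m:ℝ)| ≤ M := by rw [hM_def]; exact le_max_left _ _
      nlinarith [abs_nonneg (m:ℝ), sq_abs (m:ℝ)]
    calc S ≤ (2 + 2 * (m:ℝ)^2) * A := hstep1.trans (hstep2.le.trans hstep3)
      _ ≤ (2 + 2 * M^2) * A := by nlinarith
  -- E2 * S ≤ C'
  have hE2M : E2 ≤ Real.exp (-(a * M)) := by
    rw [hE2]
    apply Real.exp_le_exp.2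
    rw [ha_def]
    nlinarith [mul_le_mul_of_nonneg_right ht (mul_pos hκ hη).le]
  have hMexp : M ^ 2 * Real.exp (-(a * M)) ≤ 4 / a ^ 2 := sq_mul_exp_neg_le a M ha hM0
  have hexp1 : Real.exp (-(a * M)) ≤ 1 := Real.exp_le_one_iff.2 (by nlinarith)
  have hE2S : E2 * S ≤ (2 + 8 / a ^ 2) * A := by
    have hE20 : 0 ≤ E2 := by rw [hE2]; exact (Real.exp_pos _).le
    calc E2 * S ≤ Real.exp (-(a * M)) * ((2 + 2 * M^2) * A) := by
          apply mul_le_mul hE2M hSbound hS0 (Real.exp_pos _).le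
      _ = 2 * Real.exp (-(a * M)) * A + 2 * (M^2 * Real.exp (-(a * M))) * A := by ring
      _ ≤ 2 * 1 * A + 2 * (4 / a ^ 2) * A := by
          have hA0 : (0:ℝ) ≤ A := by linarith
          gcongr
      _ = (2 + 8 / a ^ 2) * A := by ring
  have hC1 : (1:ℝ) ≤ (2 + 8 / a ^ 2) * A := by nlinarith [sq_nonneg a, div_nonneg (by norm_num : (0:ℝ) ≤ 8) (sq_nonneg a)]
  constructor
  · calc _ ≤ (E1 * E2) * S := hmain
      _ ≤ ((2 + 8 / a ^ 2) * A) * E1 * E2 * S := by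
          have hE10 : (0:ℝ) < E1 := by rw [hE1]; exact Real.exp_pos _
          have hE20 : (0:ℝ) < E2 := by rw [hE2]; exact Real.exp_pos _
          nlinarith [hC1, mul_nonneg (mul_nonneg hE10.le hE20.le) hS0]
  · calc _ ≤ (E1 * E2) * S := hmain
      _ ≤ ((2 + 8 / a ^ 2) * A) * E1 := by
          have hE10 : (0:ℝ) < E1 := by rw [hE1]; exact Real.exp_pos _
          nlinarith [mul_le_mul_of_nonneg_left hE2S hE10.le]
end
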